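/- For every t ∈ ℝ, the limit as s → 0 (s ≠ 0) of G^B_{n_y n_y n_y}(γ(t), γ(t+s)) equals 3κ(t)/(8π), where for x ≠ γ(s′) one defines G^B_{n_y n_y n_y}(x, γ(s′)) = −(3/(4π))·(r·n(s′))/‖r‖² + (1/(2π))·(r·n(s′))³/‖r‖⁴ with r = x − γ(s′); this function is the third iterated directional derivative of y ↦ G^B(x,y), each derivative in the direction n(s′). -/

import Mathlib

/-!
Put `r(s) = γ(t) - γ(t + s)`. Both `r · n(t + s)` and `‖r‖²` vanish to second order at `s = 0`.
Since `τ ⊥ n`, the derivative of `r · n(t + s)` is `r · n'(t + s)`, so `r · n = -κ(t) s² / 2 + o(s²)`,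
while `‖r‖² = s² + o(s²)` by the arc-length parametrization. Hence `(r · n) / ‖r‖² → -κ(t) / 2`,
and the cubic term `(r · n)³ / ‖r‖⁴ = ((r · n) / ‖r‖²)² (r · n)` tends to `0`.
-/

open Real Filter Topology MeasureTheory

noncomputable section

/-- Euclidean dot product on `ℝ × ℝ`. -/
def dot2 (v w : ℝ × ℝ) : ℝ := v.1 * w.1 + v.2 * w.2

/-- Unit tangent vector `τ(s) = γ′(s)`. -/
def tang (γ : ℝ → ℝ × ℝ) (s : ℝ) : ℝ × ℝ := deriv γ s

/-- Unit normal vector `n(s) = (τ₂(s), −τ₁(s))`. -/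
def nor (γ : ℝ → ℝ × ℝ) (s : ℝ) : ℝ × ℝ := ((deriv γ s).2, -(deriv γ s).1)

/-- Signed curvature `κ(s) = −γ″(s)·n(s)`. -/
def curv (γ : ℝ → ℝ × ℝ) (s : ℝ) : ℝ := -(dot2 (deriv (deriv γ) s) (nor γ s))

/-- Explicit formula for `G^B_{n_y n_y n_y}(x, γ(s'))`, the third iterated directional
derivative of `y ↦ G^B(x,y)` in the direction `n(s')`, with `r = x − γ(s')`. -/
def GB_ny_ny_ny (γ : ℝ → ℝ × ℝ) (x : ℝ × ℝ) (s' : ℝ) : ℝ :=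
  -(3 / (4 * π)) * dot2 (x - γ s') (nor γ s') / dot2 (x - γ s') (x - γ s')
    + 1 / (2 * π) * (dot2 (x - γ s') (nor γ s')) ^ 3 / (dot2 (x - γ s') (x - γ s')) ^ 2

theorem tendsto_div_sq_of_hasDerivAt {h h' : ℝ → ℝ} {c : ℝ}
    (hd : ∀ᶠ x in 𝓝 0, HasDerivAt h (h' x) x) (hd2 : HasDerivAt h' c 0)
    (h0 : h 0 = 0) (h'0 : h' 0 = 0) :
    Tendsto (fun s => h s / s ^ 2) (𝓝[≠] 0) (𝓝 (c / 2)) := by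
  refine HasDerivAt.lhopital_zero_nhdsNE (f' := h') (g' := fun x => 2 * x)
    (nhdsWithin_le_nhds hd) (.of_forall fun x => by simpa using hasDerivAt_pow 2 x)
    (eventually_nhdsWithin_of_forall fun x hx => mul_ne_zero two_ne_zero hx) ?_ ?_ ?_
  · simpa [h0] using hd.self_of_nhds.continuousAt.tendsto.mono_left nhdsWithin_le_nhds
  · exact ((continuous_pow 2).tendsto' 0 0 (zero_pow two_ne_zero)).mono_left nhdsWithin_le_nhds
  · refine ((hasDerivAt_iff_tendsto_slope.mp hd2).div_const 2).congr' ?_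
    filter_upwards [self_mem_nhdsWithin] with x hx
    simp only [slope_def_field, h'0, sub_zero]
    field_simp

theorem tendsto_div_of_tendsto_div_sq {F G : ℝ → ℝ} {a b : ℝ}
    (hF : Tendsto (fun s => F s / s ^ 2) (𝓝[≠] 0) (𝓝 a))
    (hG : Tendsto (fun s => G s / s ^ 2) (𝓝[≠] 0) (𝓝 b)) (hb : b ≠ 0) :
    Tendsto (fun s => F s / G s) (𝓝[≠] 0) (𝓝 (a / b)) := by
  refine (hF.div hG hb).congr' ?_
  filter_upwards [self_mem_nhdsWithin] with s hs
  exact div_div_div_cancel_right₀ (pow_ne_zero 2 hs) _ _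

theorem tendsto_zero_of_tendsto_div_sq {F : ℝ → ℝ} {a : ℝ}
    (hF : Tendsto (fun s => F s / s ^ 2) (𝓝[≠] 0) (𝓝 a)) :
    Tendsto F (𝓝[≠] 0) (𝓝 0) := by
  have hs2 : Tendsto (fun s : ℝ => s ^ 2) (𝓝[≠] 0) (𝓝 0) :=
    ((continuous_pow 2).tendsto' 0 0 (zero_pow two_ne_zero)).mono_left nhdsWithin_le_nhds
  refine (mul_zero a ▸ hF.mul hs2).congr' ?_
  filter_upwards [self_mem_nhdsWithin] with s hs
  exact div_mul_cancel₀ _ (pow_ne_zero 2 hs)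

theorem HasDerivAt.fst {u : ℝ → ℝ × ℝ} {u' : ℝ × ℝ} {x : ℝ} (hu : HasDerivAt u u' x) :
    HasDerivAt (fun x => (u x).1) u'.1 x := by
  simpa using hu.hasFDerivAt.fst.hasDerivAt

theorem HasDerivAt.snd {u : ℝ → ℝ × ℝ} {u' : ℝ × ℝ} {x : ℝ} (hu : HasDerivAt u u' x) :
    HasDerivAt (fun x => (u x).2) u'.2 x := by
  simpa using hu.hasFDerivAt.snd.hasDerivAt

theorem HasDerivAt.dot2 {u v : ℝ → ℝ × ℝ} {u' v' : ℝ × ℝ} {x : ℝ}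
    (hu : HasDerivAt u u' x) (hv : HasDerivAt v v' x) :
    HasDerivAt (fun x => dot2 (u x) (v x)) (dot2 u' (v x) + dot2 (u x) v') x :=
  ((hu.fst.mul hv.fst).add (hu.snd.mul hv.snd)).congr_deriv (by unfold _root_.dot2; ring)

theorem HasDerivAt.perp {u : ℝ → ℝ × ℝ} {u' : ℝ × ℝ} {x : ℝ} (hu : HasDerivAt u u' x) :
    HasDerivAt (fun x => ((u x).2, -(u x).1)) (u'.2, -u'.1) x :=
  hu.snd.prodMk hu.fst.neg

def normalChord (γ : ℝ → ℝ × ℝ) (t s : ℝ) : ℝ := dot2 (γ t - γ (t + s)) (nor γ (t + s))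

def chordSq (γ : ℝ → ℝ × ℝ) (t s : ℝ) : ℝ := dot2 (γ t - γ (t + s)) (γ t - γ (t + s))

section Chord

variable {γ : ℝ → ℝ × ℝ}

theorem hasDerivAt_chord (t : ℝ) {s : ℝ} (hγ : DifferentiableAt ℝ γ (t + s)) :
    HasDerivAt (fun s => γ t - γ (t + s)) (-deriv γ (t + s)) s :=
  (hγ.hasDerivAt.comp_const_add t s).const_sub (γ t)

theorem tendsto_normalChord_div_sq (hγ : ContDiff ℝ 3 γ) (t : ℝ) :
    Tendsto (fun s => normalChord γ t s / s ^ 2) (𝓝[≠] 0) (𝓝 (-curv γ t / 2)) := by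
  have hγ₁ : Differentiable ℝ γ := hγ.differentiable (by norm_num)
  have hγ₂ : Differentiable ℝ (deriv γ) := (hγ.of_le (by norm_num)).differentiable_deriv_two
  have hγ₃ : Differentiable ℝ (deriv (deriv γ)) := (hγ.deriv' (n := 2)).differentiable_deriv_two
  have hF : ∀ s, HasDerivAt (normalChord γ t)
      (dot2 (γ t - γ (t + s)) ((deriv (deriv γ) (t + s)).2, -(deriv (deriv γ) (t + s)).1)) s := by
    intro s
    refine ((hasDerivAt_chord t (hγ₁ _)).dot2
      ((hγ₂ _).hasDerivAt.perp.comp_const_add t s)).congr_deriv ?_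
    simp only [dot2, Prod.fst_neg, Prod.snd_neg]
    ring
  have hF' := (hasDerivAt_chord t (s := 0) (hγ₁ _)).dot2
    ((hγ₃ (t + 0)).hasDerivAt.perp.comp_const_add t 0)
  convert tendsto_div_sq_of_hasDerivAt (.of_forall hF) hF' (by simp [normalChord, dot2])
    (by simp [dot2]) using 2
  simp only [curv, dot2, nor, add_zero, sub_self, Prod.fst_neg, Prod.snd_neg, Prod.fst_zero,
    Prod.snd_zero]
  ring

theorem tendsto_chordSq_div_sq (hγ : ContDiff ℝ 2 γ) {t : ℝ}
    (hunit : dot2 (deriv γ t) (deriv γ t) = 1) :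
    Tendsto (fun s => chordSq γ t s / s ^ 2) (𝓝[≠] 0) (𝓝 1) := by
  have hγ₁ : Differentiable ℝ γ := hγ.differentiable (by norm_num)
  have hγ₂ : Differentiable ℝ (deriv γ) := hγ.differentiable_deriv_two
  have hG : ∀ s, HasDerivAt (chordSq γ t) (dot2 (-deriv γ (t + s)) (γ t - γ (t + s))
      + dot2 (γ t - γ (t + s)) (-deriv γ (t + s))) s :=
    fun s => (hasDerivAt_chord t (hγ₁ _)).dot2 (hasDerivAt_chord t (hγ₁ _))
  have hτ : HasDerivAt (fun s => -deriv γ (t + s)) (-deriv (deriv γ) (t + 0)) 0 :=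
    ((hγ₂ _).hasDerivAt.comp_const_add t 0).neg
  have hG' := (hτ.dot2 (hasDerivAt_chord t (hγ₁ _))).add
    ((hasDerivAt_chord t (hγ₁ _)).dot2 hτ)
  convert tendsto_div_sq_of_hasDerivAt (.of_forall hG) hG' (by simp [chordSq, dot2])
    (by simp [dot2]) using 2
  simp only [dot2, add_zero, sub_self, Prod.fst_neg, Prod.snd_neg, Prod.fst_zero,
    Prod.snd_zero] at hunit ⊢
  linarith

end Chord

theorem stmt0_general (γ : ℝ → ℝ × ℝ)
    (hγ : ContDiff ℝ (⊤ : ℕ∞) γ)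
    (harc : ∀ s, dot2 (deriv γ s) (deriv γ s) = 1)
    (t : ℝ) :
    Tendsto (fun s : ℝ => GB_ny_ny_ny γ (γ t) (t + s)) (𝓝[≠] (0 : ℝ))
      (𝓝 (3 * curv γ t / (8 * π))) := by
  have hF := tendsto_normalChord_div_sq (hγ.of_le (by norm_cast)) t
  have hG := tendsto_chordSq_div_sq (hγ.of_le (by norm_cast)) (harc t)
  have hratio := tendsto_div_of_tendsto_div_sq hF hG one_ne_zero
  have hlim := (hratio.const_mul (-(3 / (4 * π)))).add
    (((hratio.pow 2).mul (tendsto_zero_of_tendsto_div_sq hF)).const_mul (1 / (2 * π)))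
  convert hlim using 2 with s
  · simp only [GB_ny_ny_ny, normalChord, chordSq]
    ring
  · field_simp
    ring

theorem stmt0 (L : ℝ) (hL : 0 < L) (γ : ℝ → ℝ × ℝ)
    (hγ : ContDiff ℝ (⊤ : ℕ∞) γ)
    (hper : ∀ s, γ (s + L) = γ s)
    (hinj : Set.InjOn γ (Set.Ico 0 L))
    (harc : ∀ s, dot2 (deriv γ s) (deriv γ s) = 1)
    (t : ℝ) :
    Tendsto (fun s : ℝ => GB_ny_ny_ny γ (γ t) (t + s)) (𝓝[≠] (0 : ℝ))
      (𝓝 (3 * curv γ t / (8 * π))) :=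
  stmt0_general γ hγ harc t
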